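/- For every integer n ≥ 1, the group GL_3(ℤ/2^nℤ) of invertible 3×3 matrices over ℤ/2^nℤ contains a nonabelian subgroup of order 21, and any two nonabelian subgroups of GL_3(ℤ/2^nℤ) of order 21 are conjugate in GL_3(ℤ/2^nℤ). -/

import Mathlib

/-!
For `m ≥ 1` the reduction `GL₃(ℤ/2^{m+1}) → GL₃(ℤ/2^m)` is surjective, and its kernel consists of
matrices `1 + X` with `X * Y = 0` for any two of them, so it is an elementary abelian 2-group.
As `21` is odd, Schur–Zassenhaus lifts subgroups of order `21` along the reduction, and the
conjugacy of complements of an abelian normal Hall subgroup lifts their conjugacy. Everything thus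
reduces to `GL₃(𝔽₂)`, a group of order `168` with eight Sylow 7-subgroups: their normalizers have
order `21`, every subgroup of order `21` is one of them, and Sylow's theorem makes them conjugate.
-/

open Pointwise

theorem IsLocalHom.of_surjective_of_isNilpotent {R S : Type*} [CommRing R] [CommRing S]
    (f : R →+* S) (hf : Function.Surjective f) (hnil : ∀ x, f x = 0 → IsNilpotent x) :
    IsLocalHom f where
  map_nonunit x := by
    rintro ⟨u, hu⟩
    obtain ⟨y, hy⟩ := hf ↑u⁻¹
    have hxy : IsUnit (1 + (x * y - 1)) := (hnil _ (by
      rw [map_sub, map_mul, ← hu, hy, Units.mul_inv, map_one, sub_self])).isUnit_one_add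
    rw [add_sub_cancel] at hxy
    exact isUnit_of_mul_isUnit_left hxy

namespace ZMod

theorem exists_eq_mul_of_castHom_eq_zero {d n : ℕ} (h : d ∣ n) {x : ZMod n}
    (hx : castHom h (ZMod d) x = 0) : ∃ c, x = d * c := by
  obtain ⟨k, rfl⟩ := intCast_surjective x
  rw [map_intCast, intCast_zmod_eq_zero_iff_dvd] at hx
  obtain ⟨c, rfl⟩ := hx
  exact ⟨c, by push_cast; rfl⟩

variable {p m : ℕ}

theorem mul_eq_zero_of_castHom_pow_succ (hm : 1 ≤ m) {x y : ZMod (p ^ (m + 1))}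
    (hx : castHom (pow_dvd_pow p m.le_succ) (ZMod (p ^ m)) x = 0)
    (hy : castHom (pow_dvd_pow p m.le_succ) (ZMod (p ^ m)) y = 0) : x * y = 0 := by
  obtain ⟨c, rfl⟩ := exists_eq_mul_of_castHom_eq_zero _ hx
  obtain ⟨d, rfl⟩ := exists_eq_mul_of_castHom_eq_zero _ hy
  have : ((p ^ m * p ^ m : ℕ) : ZMod (p ^ (m + 1))) = 0 :=
    (natCast_eq_zero_iff _ _).mpr (by rw [← pow_add]; exact pow_dvd_pow p (by omega))
  rw [Nat.cast_mul] at this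
  rw [mul_mul_mul_comm, this, zero_mul]

theorem natCast_mul_eq_zero_of_castHom_pow_succ {x : ZMod (p ^ (m + 1))}
    (hx : castHom (pow_dvd_pow p m.le_succ) (ZMod (p ^ m)) x = 0) :
    (p : ZMod (p ^ (m + 1))) * x = 0 := by
  obtain ⟨c, rfl⟩ := exists_eq_mul_of_castHom_eq_zero _ hx
  rw [← mul_assoc, Nat.cast_pow, ← pow_succ', ← Nat.cast_pow, natCast_self, zero_mul]

end ZMod

namespace Matrix.GeneralLinearGroup

variable {n R S : Type*} [Fintype n] [DecidableEq n] [CommRing R] [CommRing S]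

theorem map_surjective {f : R →+* S} [IsLocalHom f] (hf : Function.Surjective f) :
    Function.Surjective (map (n := n) f) := by
  intro u
  obtain ⟨M, hM⟩ : ∃ M : Matrix n n R, f.mapMatrix M = u :=
    ⟨(u : Matrix n n S).map (Function.surjInv hf), by ext; simp [Function.surjInv_eq hf]⟩
  have hdet : IsUnit M.det := by
    rw [← isUnit_map_iff f, RingHom.map_det, hM]
    exact u.isUnit.map detMonoidHom
  exact ⟨(isUnit_iff_isUnit_det M |>.mpr hdet).unit, Units.ext hM⟩

variable {f : R →+* S}

theorem map_sub_one_apply_eq_zero {g : GL n R} (hg : g ∈ (map f).ker) (i j : n) :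
    f (((g : Matrix n n R) - 1) i j) = 0 := by
  have h : f.mapMatrix ((g : Matrix n n R) - 1) = 0 := by
    rw [map_sub, map_one]
    exact sub_eq_zero.mpr (congrArg Units.val hg)
  exact congrFun (congrFun h i) j

section SquareZeroKernel

variable (hsq : ∀ x y, f x = 0 → f y = 0 → x * y = 0)
include hsq

theorem sub_one_mul_sub_one_eq_zero {g h : GL n R} (hg : g ∈ (map f).ker)
    (hh : h ∈ (map f).ker) : ((g : Matrix n n R) - 1) * ((h : Matrix n n R) - 1) = 0 := by
  ext i j
  simp only [mul_apply, zero_apply]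
  exact Finset.sum_eq_zero fun l _ =>
    hsq _ _ (map_sub_one_apply_eq_zero hg i l) (map_sub_one_apply_eq_zero hh l j)

theorem coe_mul_sub_one {g h : GL n R} (hg : g ∈ (map f).ker) (hh : h ∈ (map f).ker) :
    ((g * h : GL n R) : Matrix n n R) - 1 =
      ((g : Matrix n n R) - 1) + ((h : Matrix n n R) - 1) :=
  calc ((g * h : GL n R) : Matrix n n R) - 1
      = ((g : Matrix n n R) - 1) * ((h : Matrix n n R) - 1) + ((g : Matrix n n R) - 1)
          + ((h : Matrix n n R) - 1) := by rw [Units.val_mul]; noncomm_ring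
    _ = _ := by rw [sub_one_mul_sub_one_eq_zero hsq hg hh, zero_add]

theorem isMulCommutative_ker_map : IsMulCommutative (map (n := n) f).ker :=
  ⟨⟨fun g h => Subtype.ext <| Units.ext <| sub_left_injective (b := 1) <| by
    change ((g * h : GL n R) : Matrix n n R) - 1 = ((h * g : GL n R) : Matrix n n R) - 1
    rw [coe_mul_sub_one hsq g.2 h.2, coe_mul_sub_one hsq h.2 g.2, add_comm]⟩⟩

theorem coe_pow_sub_one {g : GL n R} (hg : g ∈ (map f).ker) (k : ℕ) :
    ((g ^ k : GL n R) : Matrix n n R) - 1 = k • ((g : Matrix n n R) - 1) := by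
  induction k with
  | zero => simp
  | succ k ih => rw [pow_succ, coe_mul_sub_one hsq (pow_mem hg k) hg, ih, succ_nsmul]

theorem isPGroup_ker_map {p : ℕ} (hp : ∀ x, f x = 0 → (p : R) * x = 0) :
    IsPGroup p (map (n := n) f).ker := by
  refine fun g => ⟨1, Subtype.ext <| Units.ext <| sub_eq_zero.mp ?_⟩
  rw [pow_one, Subgroup.coe_pow, Subgroup.coe_one, Units.val_one, coe_pow_sub_one hsq g.2]
  ext i j
  simpa [nsmul_eq_mul] using hp _ (map_sub_one_apply_eq_zero g.2 i j)

end SquareZeroKernel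

noncomputable abbrev reduction (n : Type*) [Fintype n] [DecidableEq n] (p m : ℕ) :
    GL n (ZMod (p ^ (m + 1))) →* GL n (ZMod (p ^ m)) :=
  map (ZMod.castHom (pow_dvd_pow p m.le_succ) (ZMod (p ^ m)))

variable {p m : ℕ}

theorem reduction_surjective (hm : 1 ≤ m) : Function.Surjective (reduction n p m) := by
  have := IsLocalHom.of_surjective_of_isNilpotent
    (ZMod.castHom (pow_dvd_pow p m.le_succ) (ZMod (p ^ m))) (ZMod.castHom_surjective _)
    fun _ hx => ⟨2, by rw [sq, ZMod.mul_eq_zero_of_castHom_pow_succ hm hx hx]⟩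
  exact map_surjective (ZMod.castHom_surjective _)

theorem isMulCommutative_ker_reduction (hm : 1 ≤ m) : IsMulCommutative (reduction n p m).ker :=
  isMulCommutative_ker_map fun _ _ => ZMod.mul_eq_zero_of_castHom_pow_succ hm

theorem isPGroup_ker_reduction (hm : 1 ≤ m) : IsPGroup p (reduction n p m).ker :=
  isPGroup_ker_map (fun _ _ => ZMod.mul_eq_zero_of_castHom_pow_succ hm) fun _ =>
    ZMod.natCast_mul_eq_zero_of_castHom_pow_succ

end Matrix.GeneralLinearGroup

namespace Subgroup

open scoped IsMulCommutative in
theorem exists_conj_eq_of_isComplement' {G : Type*} [Group G] [Finite G] {N K₁ K₂ : Subgroup G}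
    [N.Normal] [IsMulCommutative N] (hN : (Nat.card N).Coprime N.index)
    (h₁ : N.IsComplement' K₁) (h₂ : N.IsComplement' K₂) :
    ∃ n : N, K₂ = MulAut.conj (n : G) • K₁ := by
  -- A complement `K` is a transversal of `N` fixed by `K` itself, so it is the stabilizer of its
  -- class in `N.QuotientDiff`, on which `N` acts transitively.
  have key (K : Subgroup G) (hK : N.IsComplement' K) :
      ∃ α : N.QuotientDiff, K = MulAction.stabilizer G α := by
    refine ⟨Quotient.mk'' ⟨K, hK.symm⟩, eq_of_le_of_card_ge (fun k hk => ?_) ?_⟩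
    · exact congrArg Quotient.mk'' (Subtype.ext (op_smul_coe_set (K.inv_mem hk) :))
    · exact (Nat.eq_of_mul_eq_mul_left Nat.card_pos
        ((isComplement'_stabilizer_of_coprime hN).card_mul_card.trans hK.card_mul_card.symm)).le
  obtain ⟨α₁, rfl⟩ := key K₁ h₁
  obtain ⟨α₂, rfl⟩ := key K₂ h₂
  obtain ⟨n, rfl⟩ := exists_smul_eq hN α₁ α₂
  exact ⟨n, MulAction.stabilizer_smul_eq_stabilizer_map_conj (n : G) α₁⟩

variable {G G' : Type*} [Group G] [Group G']

theorem map_conj_smul (f : G →* G') (g : G) (L : Subgroup G) :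
    (MulAut.conj g • L).map f = MulAut.conj (f g) • L.map f := by
  change (L.map (MulAut.conj g).toMonoidHom).map f =
    (L.map f).map (MulAut.conj (f g)).toMonoidHom
  simp only [map_map]
  congr 1
  ext x
  simp

theorem card_subgroupOf_of_le {H K : Subgroup G} (h : H ≤ K) :
    Nat.card (H.subgroupOf K) = Nat.card H :=
  Nat.card_congr (subgroupOfEquivOfLe h).toEquiv

theorem index_ker_subgroupOf_comap {φ : G →* G'} (hφ : Function.Surjective φ)
    (H' : Subgroup G') :
    (φ.ker.subgroupOf (H'.comap φ)).index = Nat.card H' := by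
  rw [← relIndex, relIndex_ker, map_comap_eq_self_of_surjective hφ]

variable {φ : G →* G'}

theorem card_map_of_coprime_card_ker {H : Subgroup G}
    (hH : (Nat.card φ.ker).Coprime (Nat.card H)) : Nat.card (H.map φ) = Nat.card H := by
  have hinj : Set.InjOn φ H := (Set.injOn_iff_map_eq_one φ H).mpr fun a ha ha' =>
    (disjoint_iff_inf_le.mp (disjoint_of_coprime_natCard hH)) ⟨ha', ha⟩
  have := Nat.card_image_of_injOn hinj
  rwa [← coe_map] at this

variable [Finite G]

theorem exists_map_eq_of_coprime_card_ker (hφ : Function.Surjective φ) (H' : Subgroup G')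
    (hH' : (Nat.card φ.ker).Coprime (Nat.card H')) :
    ∃ H : Subgroup G, H.map φ = H' ∧ Nat.card H = Nat.card H' := by
  have := Finite.of_surjective φ hφ
  set M := H'.comap φ
  have hker : φ.ker ≤ M := MonoidHom.ker_le_comap φ H'
  obtain ⟨K, hK⟩ := exists_right_complement'_of_coprime (N := φ.ker.subgroupOf M) (by
    rwa [card_subgroupOf_of_le hker, index_ker_subgroupOf_comap hφ])
  have hcard : Nat.card (K.map M.subtype) = Nat.card H' := by
    rw [card_map_of_injective M.subtype_injective, ← hK.symm.index_eq_card,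
      index_ker_subgroupOf_comap hφ]
  refine ⟨K.map M.subtype, eq_of_le_of_card_ge ?_ ?_, hcard⟩
  · exact (map_mono (map_subtype_le K)).trans (map_comap_le φ H')
  · rw [card_map_of_coprime_card_ker (hcard ▸ hH'), hcard]

theorem exists_conj_eq_of_map_eq [IsMulCommutative φ.ker] {H K : Subgroup G}
    (hH : (Nat.card φ.ker).Coprime (Nat.card H)) (hK : (Nat.card φ.ker).Coprime (Nat.card K))
    (hHK : H.map φ = K.map φ) : ∃ g : G, K = MulAut.conj g • H := by
  set M := (H.map φ).comap φ
  have hker : φ.ker ≤ M := MonoidHom.ker_le_comap φ _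
  have hHM : H ≤ M := le_comap_map φ H
  have hKM : K ≤ M := by
    change K ≤ (H.map φ).comap φ
    rw [hHK]
    exact le_comap_map φ K
  have hidx : (φ.ker.subgroupOf M).index = Nat.card H := by
    rw [← relIndex, relIndex_ker, map_comap_eq_self (map_le_range φ H),
      card_map_of_coprime_card_ker hH]
  have hKH : Nat.card K = Nat.card H := by
    rw [← card_map_of_coprime_card_ker hK, ← hHK, card_map_of_coprime_card_ker hH]
  have hN : (Nat.card (φ.ker.subgroupOf M)).Coprime (φ.ker.subgroupOf M).index := by
    rwa [card_subgroupOf_of_le hker, hidx]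
  have hcompl {L : Subgroup G} (hLM : L ≤ M) (hL : Nat.card L = Nat.card H) :
      (φ.ker.subgroupOf M).IsComplement' (L.subgroupOf M) := by
    rw [← hidx, ← card_subgroupOf_of_le hLM] at hL
    exact isComplement'_of_coprime (hL ▸ card_mul_index _) (hL ▸ hN)
  obtain ⟨n, hn⟩ := exists_conj_eq_of_isComplement' hN (hcompl hHM rfl) (hcompl hKM hKH)
  refine ⟨n, ?_⟩
  rw [← map_subgroupOf_eq_of_le hKM, hn, map_conj_smul, map_subgroupOf_eq_of_le hHM]
  rfl

end Subgroup

def SubgroupsOfCardConjugate (G : Type*) [Group G] (m : ℕ) : Prop :=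
  ∀ H K : Subgroup G, Nat.card H = m → Nat.card K = m → ∃ g : G, K = MulAut.conj g • H

theorem SubgroupsOfCardConjugate.of_surjective {G G' : Type*} [Group G] [Group G'] [Finite G]
    {φ : G →* G'} (hφ : Function.Surjective φ) [IsMulCommutative φ.ker] {m : ℕ}
    (hm : (Nat.card φ.ker).Coprime m) (h : SubgroupsOfCardConjugate G' m) :
    SubgroupsOfCardConjugate G m := by
  have hcard {L : Subgroup G} (hL : Nat.card L = m) : Nat.card (L.map φ) = m := by
    rw [Subgroup.card_map_of_coprime_card_ker (hL ▸ hm), hL]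
  intro H K hH hK
  obtain ⟨g', hg'⟩ := h (H.map φ) (K.map φ) (hcard hH) (hcard hK)
  obtain ⟨g, rfl⟩ := hφ g'
  obtain ⟨n, hn⟩ := Subgroup.exists_conj_eq_of_map_eq (H := MulAut.conj g • H) (K := K)
    (by rwa [← Nat.card_congr (Subgroup.equivSMul _ H).toEquiv, hH]) (hK ▸ hm)
    (by rw [Subgroup.map_conj_smul, hg'])
  exact ⟨n * g, by rw [hn, map_mul, mul_smul]⟩

theorem Sylow.le_normalizer_of_card_lt {G : Type*} [Group G] [Finite G] {p : ℕ} [Fact p.Prime]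
    (P : Sylow p G) {H : Subgroup G} (hPH : (P : Subgroup G) ≤ H)
    (hH : Nat.card H < p * Nat.card P) : H ≤ Subgroup.normalizer (P : Set G) := by
  set Q := P.subtype hPH
  have hidx : (Q : Subgroup H).index < p := by
    rw [← Subgroup.card_mul_index (P.subgroupOf H), Subgroup.card_subgroupOf_of_le hPH,
      mul_comm p] at hH
    exact lt_of_mul_lt_mul_left' hH
  have hcard : Nat.card (Sylow p H) = 1 := by
    have hmod := card_sylow_modEq_one p H
    have hle := Nat.le_of_dvd (Nat.pos_of_ne_zero Subgroup.index_ne_zero_of_finite)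
      Q.card_dvd_index
    rwa [Nat.ModEq, Nat.mod_eq_of_lt (by omega),
      Nat.mod_eq_of_lt (Fact.out : p.Prime).one_lt] at hmod
  have : Subsingleton (Sylow p H) := (Nat.card_eq_one_iff_unique.mp hcard).1
  have := Sylow.normal_of_subsingleton Q
  rw [Sylow.coe_subtype] at this
  exact Subgroup.le_normalizer_of_normal_subgroupOf hPH

instance Nat.fact_prime_seven : Fact (Nat.Prime 7) := ⟨by norm_num⟩

theorem Nat.factorization_168_seven : Nat.factorization 168 7 = 1 := by
  rw [Nat.factorization_def _ Fact.out, show 168 = 7 * 24 by rfl,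
    padicValNat.mul (by norm_num) (by norm_num), padicValNat.self (by norm_num),
    padicValNat.eq_zero_of_not_dvd (by norm_num)]

section CardEq168

variable {G : Type*} [Group G] [Finite G] (hG : Nat.card G = 168)
include hG

theorem card_sylow_seven_of_card_eq_168 (P : Sylow 7 G) : Nat.card P = 7 := by
  rw [P.card_eq_multiplicity, hG, Nat.factorization_168_seven, pow_one]

theorem card_normalizer_sylow_seven_of_card_eq_168 (h7 : Nat.card (Sylow 7 G) ≠ 1)
    (P : Sylow 7 G) : Nat.card (Subgroup.normalizer (P : Set G)) = 21 := by
  have hidx : (P : Subgroup G).index = 24 := by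
    have := Subgroup.card_mul_index (P : Subgroup G)
    rw [card_sylow_seven_of_card_eq_168 hG, hG] at this
    omega
  have h8 : Nat.card (Sylow 7 G) = 8 := by
    have hdvd := P.card_dvd_index
    have hmod := card_sylow_modEq_one 7 G
    rw [hidx] at hdvd
    rw [Nat.ModEq] at hmod
    have := Nat.le_of_dvd (by norm_num) hdvd
    interval_cases Nat.card (Sylow 7 G) <;> omega
  have := Subgroup.card_mul_index (Subgroup.normalizer (P : Set G))
  rw [← P.card_eq_index_normalizer, h8, hG] at this
  omega

theorem exists_sylow_seven_eq_normalizer_of_card_eq_168 (h7 : Nat.card (Sylow 7 G) ≠ 1)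
    {H : Subgroup G} (hH : Nat.card H = 21) :
    ∃ P : Sylow 7 G, H = Subgroup.normalizer (P : Set G) := by
  obtain ⟨x, hx⟩ := exists_prime_orderOf_dvd_card' (G := H) 7 (by rw [hH]; norm_num)
  let P : Sylow 7 G := Sylow.ofCard (Subgroup.zpowers (x : G)) (by
    rw [Nat.card_zpowers, Subgroup.orderOf_coe, hx, hG, Nat.factorization_168_seven, pow_one])
  refine ⟨P, Subgroup.eq_of_le_of_card_ge (P.le_normalizer_of_card_lt ?_ ?_) ?_⟩
  · exact Subgroup.zpowers_le.mpr x.2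
  · rw [hH, card_sylow_seven_of_card_eq_168 hG]
    norm_num
  · rw [card_normalizer_sylow_seven_of_card_eq_168 hG h7, hH]

theorem subgroupsOfCardConjugate_21_of_card_eq_168 (h7 : Nat.card (Sylow 7 G) ≠ 1) :
    SubgroupsOfCardConjugate G 21 := by
  intro H K hH hK
  obtain ⟨P, rfl⟩ := exists_sylow_seven_eq_normalizer_of_card_eq_168 hG h7 hH
  obtain ⟨Q, rfl⟩ := exists_sylow_seven_eq_normalizer_of_card_eq_168 hG h7 hK
  obtain ⟨g, rfl⟩ := MulAction.exists_smul_eq G P Q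
  exact ⟨g, (Subgroup.map_equiv_normalizer_eq _ (MulAut.conj g)).symm⟩

end CardEq168

namespace GL3F2

/-- The companion matrix of `X³ + X + 1`, of order `7`. -/
def a : GL (Fin 3) (ZMod 2) :=
  ⟨!![0,0,1; 1,0,1; 0,1,0], !![0,0,1; 1,0,1; 0,1,0] ^ 6, by decide, by decide⟩

def t : GL (Fin 3) (ZMod 2) :=
  ⟨!![1,0,0; 0,0,1; 0,1,1], !![1,0,0; 0,0,1; 0,1,1] ^ 2, by decide, by decide⟩

def s : GL (Fin 3) (ZMod 2) :=
  ⟨!![0,1,0; 1,0,0; 0,0,1], !![0,1,0; 1,0,0; 0,0,1], by decide, by decide⟩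

theorem card : Nat.card (GL (Fin 3) (ZMod 2)) = 168 := by
  rw [Matrix.card_GL_field, ZMod.card]
  decide

theorem orderOf_a : orderOf a = 7 :=
  orderOf_eq_prime (by decide) (by decide)

theorem card_zpowers_a :
    Nat.card (Subgroup.zpowers a) = 7 ^ (Nat.card (GL (Fin 3) (ZMod 2))).factorization 7 := by
  rw [Nat.card_zpowers, orderOf_a, card, Nat.factorization_168_seven, pow_one]

theorem t_mem_normalizer : t ∈ Subgroup.normalizer (Subgroup.zpowers a : Set _) := by
  refine Subgroup.mem_normalizer_fintype ?_
  rintro _ ⟨k, rfl⟩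
  change t * a ^ k * t⁻¹ ∈ Subgroup.zpowers a
  rw [← conj_zpow, show t * a * t⁻¹ = a ^ 2 by decide]
  exact zpow_mem (pow_mem (Subgroup.mem_zpowers a) 2) k

theorem card_sylow_seven_ne_one : Nat.card (Sylow 7 (GL (Fin 3) (ZMod 2))) ≠ 1 := by
  intro h
  have : Subsingleton (Sylow 7 (GL (Fin 3) (ZMod 2))) := (Nat.card_eq_one_iff_unique.mp h).1
  have hconj := (Sylow.normal_of_subsingleton (Sylow.ofCard _ card_zpowers_a)).conj_mem a
    (Subgroup.mem_zpowers a) s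
  classical
  rw [Sylow.coe_ofCard, mem_zpowers_iff_mem_range_orderOf, orderOf_a, Finset.mem_image] at hconj
  obtain ⟨i, hi, hai⟩ := hconj
  exact (show ∀ i < 7, a ^ i ≠ s * a * s⁻¹ by decide) i (Finset.mem_range.mp hi) hai

theorem exists_nonabelian_subgroup_card_21 :
    ∃ H : Subgroup (GL (Fin 3) (ZMod 2)),
      Nat.card H = 21 ∧ ¬ (∀ x y : H, x * y = y * x) := by
  refine ⟨_, card_normalizer_sylow_seven_of_card_eq_168 card card_sylow_seven_ne_one
    (Sylow.ofCard _ card_zpowers_a), fun hcomm => ?_⟩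
  have := hcomm ⟨a, Subgroup.le_normalizer (Subgroup.mem_zpowers a)⟩ ⟨t, t_mem_normalizer⟩
  exact (show a * t ≠ t * a by decide) (congrArg Subtype.val this)

end GL3F2

section TwoPow

open Matrix.GeneralLinearGroup

theorem coprime_card_ker_reduction_two_21 {m : ℕ} (hm : 1 ≤ m) :
    (Nat.card (reduction (Fin 3) 2 m).ker).Coprime 21 := by
  obtain ⟨k, hk⟩ := (isPGroup_ker_reduction (n := Fin 3) (p := 2) hm).exists_card_eq
  rw [hk]
  exact Nat.Coprime.pow_left k (by norm_num)

theorem exists_nonabelian_subgroup_card_21_GL_two_pow (n : ℕ) (hn : 1 ≤ n) :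
    ∃ H : Subgroup (GL (Fin 3) (ZMod (2 ^ n))),
      Nat.card H = 21 ∧ ¬ (∀ x y : H, x * y = y * x) := by
  induction n, hn using Nat.le_induction with
  | base => exact GL3F2.exists_nonabelian_subgroup_card_21
  | succ m hm ih =>
    obtain ⟨H', hH', hnc⟩ := ih
    obtain ⟨H, rfl, hH⟩ := Subgroup.exists_map_eq_of_coprime_card_ker
      (reduction_surjective hm) H' (hH' ▸ coprime_card_ker_reduction_two_21 hm)
    refine ⟨H, hH.trans hH', fun hc => hnc ?_⟩
    rintro ⟨_, x, hx, rfl⟩ ⟨_, y, hy, rfl⟩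
    have hxy : x * y = y * x := congrArg Subtype.val (hc ⟨x, hx⟩ ⟨y, hy⟩)
    exact Subtype.ext <| by simp only [Subgroup.coe_mul, ← map_mul, hxy]

theorem subgroupsOfCardConjugate_21_GL_two_pow (n : ℕ) (hn : 1 ≤ n) :
    SubgroupsOfCardConjugate (GL (Fin 3) (ZMod (2 ^ n))) 21 := by
  induction n, hn using Nat.le_induction with
  | base =>
    exact subgroupsOfCardConjugate_21_of_card_eq_168 GL3F2.card GL3F2.card_sylow_seven_ne_one
  | succ m hm ih =>
    have := isMulCommutative_ker_reduction (n := Fin 3) (p := 2) hm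
    exact ih.of_surjective (reduction_surjective hm) (coprime_card_ker_reduction_two_21 hm)

end TwoPow

/-- For every `n ≥ 1`, `GL_3(ℤ/2^nℤ)` contains a nonabelian subgroup of
order `21`, and any two nonabelian subgroups of order `21` are conjugate. -/
theorem stmt11 (n : ℕ) (hn : 1 ≤ n) :
    (∃ H : Subgroup (GL (Fin 3) (ZMod (2 ^ n))),
        Nat.card H = 21 ∧ ¬ (∀ x y : H, x * y = y * x)) ∧
    (∀ H K : Subgroup (GL (Fin 3) (ZMod (2 ^ n))),
        Nat.card H = 21 → ¬ (∀ x y : H, x * y = y * x) →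
        Nat.card K = 21 → ¬ (∀ x y : K, x * y = y * x) →
        ∃ g : GL (Fin 3) (ZMod (2 ^ n)), K = H.map (MulAut.conj g).toMonoidHom) :=
  ⟨exists_nonabelian_subgroup_card_21_GL_two_pow n hn,
    fun H K hH _ hK _ => subgroupsOfCardConjugate_21_GL_two_pow n hn H K hH hK⟩
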